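/- arXiv:1808.05396 — 7 statements merged into one kernel-verified Lean document; each statement's English description precedes it below -/
import Mathlib

section
/- For every k ∈ {1,2,3,4}, the vector P_k lies on the Clebsch cone, i.e. ∑ i, P_k i = 0 and ∑ i, (P_k i)³ = 0; the four vectors P_1, P_2, P_3, P_4 are pairwise non-proportional (for k ≠ k' there is no λ ∈ ℂ with P_k = λ • P_{k'}); for every g ∈ G₂₀ and every k ∈ {1,2,3,4} there exist k' ∈ {1,2,3,4} and λ ∈ ℂ, λ ≠ 0, with g • P_k = λ • P_{k'}; and for all k, k' ∈ {1,2,3,4} there exist g ∈ G₂₀ and λ ∈ ℂ, λ ≠ 0, with g • P_k = λ • P_{k'}. (Hence {P_1, P_2, P_3, P_4} is a single G₂₀-orbit of length 4 of projective points on the Clebsch cubic surface.) -/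
/-- The 5-cycle `(0 1 2 3 4)` on `Fin 5`, sending `i` to `i + 1 (mod 5)`. -/
def c : Equiv.Perm (Fin 5) := finRotate 5

/-- The 4-cycle `(1 2 4 3)` on `Fin 5`, fixing `0`. -/
def d : Equiv.Perm (Fin 5) := ([1, 2, 4, 3] : List (Fin 5)).formPerm

/-- The group `G₂₀ ≅ C₅ ⋊ C₄` generated by `c` and `d`. -/
def G₂₀ : Subgroup (Equiv.Perm (Fin 5)) := Subgroup.closure {c, d}

/-- The linear action of a permutation `g` on vectors: `(g • v) i = v (g⁻¹ i)`. -/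
def permSMul (g : Equiv.Perm (Fin 5)) (v : Fin 5 → ℂ) : Fin 5 → ℂ := fun i => v (g⁻¹ i)

/-- The point `P_k`, `P_k i = ζ ^ (k * i)`. -/
def P (ζ : ℂ) (k : ℕ) : Fin 5 → ℂ := fun i => ζ ^ (k * (i : ℕ))

lemma pow_congr5 {ζ : ℂ} (hζ : IsPrimitiveRoot ζ 5) {a b : ℕ} (h : a % 5 = b % 5) :
    ζ ^ a = ζ ^ b := by
  conv_lhs => rw [← Nat.div_add_mod a 5]
  conv_rhs => rw [← Nat.div_add_mod b 5]
  simp only [pow_add, pow_mul, hζ.pow_eq_one, one_pow, one_mul, h]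

lemma P_congr {ζ : ℂ} (hζ : IsPrimitiveRoot ζ 5) {k k' : ℕ} (h : k % 5 = k' % 5) :
    P ζ k = P ζ k' :=
  funext fun i => pow_congr5 hζ (Nat.ModEq.mul_right (i : ℕ) h)

lemma sum_pow_eq_zero {ζ : ℂ} (hζ : IsPrimitiveRoot ζ 5) {m : ℕ} (hm : m % 5 ≠ 0) :
    ∑ i : Fin 5, ζ ^ (m * (i : ℕ)) = 0 := by
  have hne : ζ ^ m ≠ 1 := by
    intro h
    exact hm (Nat.eq_zero_of_dvd_of_lt (Nat.dvd_mod_iff (dvd_refl 5) |>.mpr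
      ((hζ.pow_eq_one_iff_dvd m).mp h)) (Nat.mod_lt _ (by norm_num)))
  have h5 : (ζ ^ m) ^ 5 = 1 := by
    rw [← pow_mul, mul_comm, pow_mul, hζ.pow_eq_one, one_pow]
  have : ∑ i : Fin 5, ζ ^ (m * (i : ℕ)) = ∑ i ∈ Finset.range 5, (ζ ^ m) ^ i := by
    rw [← Fin.sum_univ_eq_sum_range]
    exact Finset.sum_congr rfl fun i _ => by rw [← pow_mul]
  rw [this, geom_sum_eq hne, h5, sub_self, zero_div]

lemma permSMul_one (v : Fin 5 → ℂ) : permSMul 1 v = v := by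
  funext i; simp [permSMul]

lemma permSMul_mul (g h : Equiv.Perm (Fin 5)) (v : Fin 5 → ℂ) :
    permSMul (g * h) v = permSMul g (permSMul h v) := by
  funext i; simp [permSMul, mul_inv_rev]

lemma permSMul_smul (g : Equiv.Perm (Fin 5)) (lam : ℂ) (v : Fin 5 → ℂ) :
    permSMul g (lam • v) = lam • permSMul g v := rfl

lemma permSMul_inv_cancel (g : Equiv.Perm (Fin 5)) (v : Fin 5 → ℂ) :
    permSMul g⁻¹ (permSMul g v) = v := by
  funext i; simp [permSMul]

lemma permSMul_c {ζ : ℂ} (hζ : IsPrimitiveRoot ζ 5) (k : ℕ) :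
    permSMul c (P ζ k) = (ζ ^ (4 * k)) • P ζ k := by
  funext i
  simp only [permSMul, P, Pi.smul_apply, smul_eq_mul, ← pow_add]
  apply pow_congr5 hζ
  have hc : ((c⁻¹ i : Fin 5) : ℕ) % 5 = ((i : ℕ) + 4) % 5 := by revert i; decide
  have := Nat.ModEq.mul_left k hc
  rw [show k * ((i : ℕ) + 4) = 4 * k + k * (i : ℕ) by ring] at this
  exact this

lemma permSMul_d {ζ : ℂ} (hζ : IsPrimitiveRoot ζ 5) (k : ℕ) :
    permSMul d (P ζ k) = P ζ (3 * k) := by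
  funext i
  simp only [permSMul, P]
  apply pow_congr5 hζ
  have hd : ((d⁻¹ i : Fin 5) : ℕ) % 5 = (3 * (i : ℕ)) % 5 := by revert i; decide
  have := Nat.ModEq.mul_left k hd
  rw [show k * (3 * (i : ℕ)) = 3 * k * (i : ℕ) by ring] at this
  exact this

lemma permSMul_dpow {ζ : ℂ} (hζ : IsPrimitiveRoot ζ 5) (m k : ℕ) :
    permSMul (d ^ m) (P ζ k) = P ζ (3 ^ m * k) := by
  induction m with
  | zero => rw [pow_zero, permSMul_one]; exact congrArg (P ζ) (by ring)
  | succ n ih =>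
      rw [pow_succ', permSMul_mul, ih, permSMul_d hζ]
      exact congrArg (P ζ) (by ring)

lemma hd_mem : d ∈ G₂₀ := Subgroup.subset_closure (Set.mem_insert_of_mem _ rfl)

lemma trans_aux {ζ : ℂ} (hζ : IsPrimitiveRoot ζ 5) (m k k' : ℕ)
    (h : (3 ^ m * k) % 5 = k' % 5) :
    ∃ g ∈ G₂₀, ∃ lam : ℂ, lam ≠ 0 ∧ permSMul g (P ζ k) = lam • P ζ k' :=
  ⟨d ^ m, pow_mem hd_mem m, 1, one_ne_zero, by
    rw [one_smul, permSMul_dpow hζ]; exact P_congr hζ h⟩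

theorem stmt0 (ζ : ℂ) (hζ : IsPrimitiveRoot ζ 5) :
    (∀ k ∈ Finset.Icc 1 4, (∑ i, P ζ k i) = 0 ∧ (∑ i, (P ζ k i) ^ 3) = 0) ∧
    (∀ k ∈ Finset.Icc 1 4, ∀ k' ∈ Finset.Icc 1 4, k ≠ k' →
      ¬ ∃ lam : ℂ, P ζ k = lam • P ζ k') ∧
    (∀ g ∈ G₂₀, ∀ k ∈ Finset.Icc 1 4, ∃ k' ∈ Finset.Icc 1 4, ∃ lam : ℂ, lam ≠ 0 ∧
      permSMul g (P ζ k) = lam • P ζ k') ∧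
    (∀ k ∈ Finset.Icc 1 4, ∀ k' ∈ Finset.Icc 1 4, ∃ g ∈ G₂₀, ∃ lam : ℂ, lam ≠ 0 ∧
      permSMul g (P ζ k) = lam • P ζ k') := by
  have hz : ζ ≠ 0 := hζ.ne_zero (by norm_num)
  refine ⟨?_, ?_, ?_, ?_⟩
  · intro k hk
    rw [Finset.mem_Icc] at hk
    constructor
    · exact sum_pow_eq_zero hζ (by omega)
    · have : ∀ i : Fin 5, (P ζ k i) ^ 3 = ζ ^ (3 * k * (i : ℕ)) := by
        intro i; rw [P, ← pow_mul]; exact congrArg (ζ ^ ·) (by ring)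
      rw [Finset.sum_congr rfl fun i _ => this i]
      exact sum_pow_eq_zero hζ (by omega)
  · intro k hk k' hk' hne ⟨lam, h⟩
    rw [Finset.mem_Icc] at hk hk'
    have h0 := congrFun h 0
    have h1 := congrFun h 1
    simp only [P, Pi.smul_apply, smul_eq_mul, Fin.val_zero, Fin.val_one, mul_zero,
      mul_one, pow_zero] at h0 h1
    rw [← h0, one_mul] at h1
    exact hne (hζ.pow_inj (by omega) (by omega) h1)
  · intro g hg
    have key : (∀ k ∈ Finset.Icc 1 4, ∃ k' ∈ Finset.Icc 1 4, ∃ lam : ℂ, lam ≠ 0 ∧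
          permSMul g (P ζ k) = lam • P ζ k') ∧
        (∀ k ∈ Finset.Icc 1 4, ∃ k' ∈ Finset.Icc 1 4, ∃ lam : ℂ, lam ≠ 0 ∧
          permSMul g (P ζ k') = lam • P ζ k) := by
      induction hg using Subgroup.closure_induction with
      | mem x hx =>
          rcases hx with rfl | rfl
          · constructor <;>
              exact fun k hk => ⟨k, hk, ζ ^ (4 * k), pow_ne_zero _ hz, permSMul_c hζ k⟩
          · constructor
            · intro k hk
              rw [Finset.mem_Icc] at hk
              refine ⟨3 ^ 1 * k % 5, ?_, 1, one_ne_zero, ?_⟩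
              · rw [Finset.mem_Icc]; omega
              · rw [one_smul, permSMul_d hζ]
                exact P_congr hζ (by omega)
            · intro k hk
              rw [Finset.mem_Icc] at hk
              refine ⟨2 * k % 5, ?_, 1, one_ne_zero, ?_⟩
              · rw [Finset.mem_Icc]; omega
              · rw [one_smul, permSMul_d hζ]
                exact P_congr hζ (by omega)
      | one =>
          constructor <;>
            exact fun k hk => ⟨k, hk, 1, one_ne_zero, by rw [one_smul, permSMul_one]⟩
      | mul x y hx hy Qx Qy =>
          constructor
          · intro k hk
            obtain ⟨k₁, hk₁, l₁, hl₁, e₁⟩ := Qy.1 k hk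
            obtain ⟨k₂, hk₂, l₂, hl₂, e₂⟩ := Qx.1 k₁ hk₁
            exact ⟨k₂, hk₂, l₂ * l₁, mul_ne_zero hl₂ hl₁, by
              rw [permSMul_mul, e₁, permSMul_smul, e₂, smul_smul, mul_comm l₁ l₂]⟩
          · intro k hk
            obtain ⟨k₁, hk₁, l₁, hl₁, e₁⟩ := Qx.2 k hk
            obtain ⟨k₂, hk₂, l₂, hl₂, e₂⟩ := Qy.2 k₁ hk₁
            exact ⟨k₂, hk₂, l₂ * l₁, mul_ne_zero hl₂ hl₁, by
              rw [permSMul_mul, e₂, permSMul_smul, e₁, smul_smul]⟩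
      | inv x hx Qx =>
          constructor
          · intro k hk
            obtain ⟨k₁, hk₁, l, hl, e⟩ := Qx.2 k hk
            refine ⟨k₁, hk₁, l⁻¹, inv_ne_zero hl, ?_⟩
            have h2 := congrArg (permSMul x⁻¹) e
            rw [permSMul_smul, permSMul_inv_cancel] at h2
            rw [h2, smul_smul, inv_mul_cancel₀ hl, one_smul]
          · intro k hk
            obtain ⟨k₁, hk₁, l, hl, e⟩ := Qx.1 k hk
            refine ⟨k₁, hk₁, l⁻¹, inv_ne_zero hl, ?_⟩
            have h2 := congrArg (permSMul x⁻¹) e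
            rw [permSMul_smul, permSMul_inv_cancel] at h2
            rw [h2, smul_smul, inv_mul_cancel₀ hl, one_smul]
    exact key.1
  · intro k hk k' hk'
    rw [Finset.mem_Icc] at hk hk'
    obtain ⟨hk1, hk2⟩ := hk
    obtain ⟨hk1', hk2'⟩ := hk'
    interval_cases k <;> interval_cases k' <;>
      first
        | exact trans_aux hζ 0 _ _ (by decide)
        | exact trans_aux hζ 1 _ _ (by decide)
        | exact trans_aux hζ 2 _ _ (by decide)
        | exact trans_aux hζ 3 _ _ (by decide)
end

section
/- If v : Fin 5 → ℂ is nonzero, ∑ i, v i = 0, and there exists λ ∈ ℂ with d • v = λ • v, then v is a nonzero scalar multiple of one of the four vectors R₁, R₂, R₃, R₄. Moreover ∑ i, (R_m i)³ = 0 for m = 1, 2, 3, while ∑ i, (R₄ i)³ ≠ 0. (The 4-cycle d has exactly four projective fixed points on the hyperplane ∑ x_i = 0 in ℙ⁴, of which exactly R₁, R₂, R₃ lie on the Clebsch cubic surface.) -/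
def R₁ : Fin 5 → ℂ := ![0, -1, 1, 1, -1]
def R₂ : Fin 5 → ℂ := ![0, -Complex.I, -1, 1, Complex.I]
def R₃ : Fin 5 → ℂ := ![0, Complex.I, -1, 1, -Complex.I]
def R₄ : Fin 5 → ℂ := ![-4, 1, 1, 1, 1]

open Complex

theorem Complex.eq_one_or_neg_one_or_I_or_neg_I_of_pow_four_eq_one {z : ℂ} (hz : z ^ 4 = 1) :
    z = 1 ∨ z = -1 ∨ z = I ∨ z = -I := by
  have h : (z - 1) * (z + 1) * (z - I) * (z + I) = 0 := by
    linear_combination hz + (1 - z ^ 2) * I_sq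
  simp only [mul_eq_zero, sub_eq_zero, add_eq_zero_iff_eq_neg] at h
  tauto

def dEigenvector (lam : ℂ) : Fin 5 → ℂ := ![-(1 + lam + lam ^ 2 + lam ^ 3), 1, lam ^ 3, lam, lam ^ 2]

section Eigenvector

variable {v : Fin 5 → ℂ} {lam : ℂ}

theorem apply_eq_mul_of_permSMul_d_eq_smul (hv : permSMul d v = lam • v) :
    v 3 = lam * v 1 ∧ v 4 = lam * v 3 ∧ v 2 = lam * v 4 ∧ v 1 = lam * v 2 :=
  ⟨congrFun hv 1, congrFun hv 3, congrFun hv 4, congrFun hv 2⟩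

theorem eq_smul_dEigenvector (hv : permSMul d v = lam • v) (hs : ∑ i, v i = 0) :
    v = v 1 • dEigenvector lam := by
  obtain ⟨e3, e4, e2, -⟩ := apply_eq_mul_of_permSMul_d_eq_smul hv
  rw [Fin.sum_univ_five] at hs
  funext i
  fin_cases i <;> simp only [Fin.zero_eta, Fin.mk_one, Fin.reduceFinMk, Fin.isValue, dEigenvector,
    Pi.smul_apply, Matrix.cons_val, Matrix.cons_val_zero, Matrix.cons_val_one, smul_eq_mul, mul_one]
  · linear_combination hs - (e2 + lam * e4 + lam ^ 2 * e3) - e3 - (e4 + lam * e3)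
  · linear_combination e2 + lam * e4 + lam ^ 2 * e3
  · linear_combination e3
  · linear_combination e4 + lam * e3

theorem pow_four_eq_one_of_permSMul_d_eq_smul (hv : permSMul d v = lam • v) (h1 : v 1 ≠ 0) :
    lam ^ 4 = 1 := by
  obtain ⟨e3, e4, e2, e1⟩ := apply_eq_mul_of_permSMul_d_eq_smul hv
  refine mul_right_cancel₀ h1 ?_
  linear_combination -(e1 + lam * e2 + lam ^ 2 * e4 + lam ^ 3 * e3)

end Eigenvector

theorem dEigenvector_one : dEigenvector 1 = R₄ := by
  funext i; fin_cases i <;> norm_num [dEigenvector, R₄]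

theorem dEigenvector_neg_one : dEigenvector (-1) = -R₁ := by
  funext i; fin_cases i <;> norm_num [dEigenvector, R₁]

theorem dEigenvector_I : dEigenvector I = I • R₂ := by
  funext i; fin_cases i <;> simp [dEigenvector, R₂, pow_three]

theorem dEigenvector_neg_I : dEigenvector (-I) = -I • R₃ := by
  funext i; fin_cases i <;> simp [dEigenvector, R₃, pow_three]

theorem stmt2 :
    (∀ v : Fin 5 → ℂ, v ≠ 0 → (∑ i, v i) = 0 →
      (∃ lam : ℂ, permSMul d v = lam • v) →
      ∃ μ : ℂ, μ ≠ 0 ∧ (v = μ • R₁ ∨ v = μ • R₂ ∨ v = μ • R₃ ∨ v = μ • R₄)) ∧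
    (∑ i, (R₁ i) ^ 3) = 0 ∧ (∑ i, (R₂ i) ^ 3) = 0 ∧ (∑ i, (R₃ i) ^ 3) = 0 ∧
    (∑ i, (R₄ i) ^ 3) ≠ 0 := by
  refine ⟨fun v hv hs ⟨lam, hlam⟩ => ?_, ?_, ?_, ?_, ?_⟩
  · have hvec := eq_smul_dEigenvector hlam hs
    have h1 : v 1 ≠ 0 := fun h => hv (by rw [hvec, h, zero_smul])
    have hlam4 := pow_four_eq_one_of_permSMul_d_eq_smul hlam h1
    generalize v 1 = c at hvec h1
    subst hvec
    rcases eq_one_or_neg_one_or_I_or_neg_I_of_pow_four_eq_one hlam4 with rfl | rfl | rfl | rfl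
    · exact ⟨c, h1, by simp [dEigenvector_one]⟩
    · exact ⟨-c, neg_ne_zero.mpr h1, by simp [dEigenvector_neg_one]⟩
    · exact ⟨c * I, mul_ne_zero h1 I_ne_zero, by simp [dEigenvector_I, smul_smul]⟩
    · exact ⟨c * -I, mul_ne_zero h1 (neg_ne_zero.mpr I_ne_zero),
        by simp [dEigenvector_neg_I, smul_smul]⟩
  · simp [R₁, Fin.sum_univ_five]; norm_num
  · simp [R₂, Fin.sum_univ_five, pow_three]
  · simp [R₃, Fin.sum_univ_five, pow_three]
  · simp [R₄, Fin.sum_univ_five]; norm_num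
end

section
/- There is no nonzero vector v : Fin 5 → ℂ with ∑ i, v i = 0 such that both c • v = λ • v for some λ ∈ ℂ and d² • v = μ • v for some μ ∈ ℂ. (Here d² is the double transposition (1 4)(2 3); the subgroup ⟨c, d²⟩ ≅ D₁₀ of G₂₀ therefore has no fixed point on the hyperplane ∑ x_i = 0 in ℙ⁴; in particular G₂₀ has no fixed points and no orbit of length 2 on the Clebsch cubic surface.) -/
theorem stmt5 :
    ¬ ∃ v : Fin 5 → ℂ, v ≠ 0 ∧ (∑ i, v i) = 0 ∧
      (∃ lam : ℂ, permSMul c v = lam • v) ∧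
      (∃ μ : ℂ, permSMul (d ^ 2) v = μ • v) := by
  rintro ⟨v, hv0, hsum, ⟨lam, hc⟩, ⟨μ, hd⟩⟩
  have e0 := congrFun hc 0
  have e1 := congrFun hc 1
  have e2 := congrFun hc 2
  have e3 := congrFun hc 3
  have e4 := congrFun hc 4
  have f0 := congrFun hd 0
  have f2 := congrFun hd 2
  simp only [permSMul, Pi.smul_apply, smul_eq_mul] at e0 e1 e2 e3 e4 f0 f2
  rw [show c⁻¹ (0:Fin 5) = 4 by decide] at e0
  rw [show c⁻¹ (1:Fin 5) = 0 by decide] at e1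
  rw [show c⁻¹ (2:Fin 5) = 1 by decide] at e2
  rw [show c⁻¹ (3:Fin 5) = 2 by decide] at e3
  rw [show c⁻¹ (4:Fin 5) = 3 by decide] at e4
  rw [show (d^2)⁻¹ (0:Fin 5) = 0 by decide] at f0
  rw [show (d^2)⁻¹ (2:Fin 5) = 3 by decide] at f2
  rw [Fin.sum_univ_five] at hsum
  -- lam ≠ 0
  have hlam : lam ≠ 0 := by
    rintro rfl
    rw [zero_mul] at e0 e1 e2 e3 e4
    apply hv0
    funext i
    fin_cases i <;> simp only [Pi.zero_apply]
    · exact e1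
    · exact e2
    · exact e3
    · exact e4
    · exact e0
  -- v 0 ≠ 0
  have h0 : v 0 ≠ 0 := by
    intro h
    apply hv0
    have h1' : v 1 = 0 := by
      have := e1; rw [h] at this; exact (mul_eq_zero.mp this.symm).resolve_left hlam
    have h2' : v 2 = 0 := by
      have := e2; rw [h1'] at this; exact (mul_eq_zero.mp this.symm).resolve_left hlam
    have h3' : v 3 = 0 := by
      have := e3; rw [h2'] at this; exact (mul_eq_zero.mp this.symm).resolve_left hlam
    have h4' : v 4 = 0 := by
      have := e4; rw [h3'] at this; exact (mul_eq_zero.mp this.symm).resolve_left hlam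
    funext i; fin_cases i <;> simp only [Pi.zero_apply] <;> assumption
  -- μ = 1
  have hμ : μ = 1 := by
    rcases mul_eq_zero.mp (show (μ - 1) * v 0 = 0 by linear_combination -f0) with h | h
    · exact sub_eq_zero.mp h
    · exact absurd h h0
  subst hμ
  rw [one_mul] at f2
  -- v 2 ≠ 0
  have hv2ne : v 2 ≠ 0 := by
    intro h
    apply h0
    rw [e1, e2, h, mul_zero, mul_zero]
  -- lam = 1
  have hlam1 : lam = 1 := by
    rcases mul_eq_zero.mp (show (lam - 1) * v 2 = 0 by
        linear_combination (-1 : ℂ) * e3 + (-lam) * f2) with h | h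
    · exact sub_eq_zero.mp h
    · exact absurd h hv2ne
  subst hlam1
  rw [one_mul] at e0 e1 e2 e3 e4
  apply h0
  have h5 : (5:ℂ) * v 0 = 0 := by
    linear_combination hsum + 4 * e1 + 3 * e2 + 2 * e3 + e4
  exact (mul_eq_zero.mp h5).resolve_left (by norm_num)
end

section
/- The subgroup of Equiv.Perm (Fin 5) generated by c and d² (where d² is the double transposition (1 4)(2 3)) has order 10, is isomorphic to the dihedral group DihedralGroup 5, and is the unique subgroup of G₂₀ of order 10: if H is a subgroup with H ≤ G₂₀ and |H| = 10, then H = Subgroup.closure {c, d²}. Moreover this subgroup is normal in G₂₀. -/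
set_option maxRecDepth 20000
set_option maxHeartbeats 1000000

def f5 : DihedralGroup 5 → Equiv.Perm (Fin 5)
  | .r i => c ^ i.val
  | .sr i => d ^ 2 * c ^ i.val

def f5hom : DihedralGroup 5 →* Equiv.Perm (Fin 5) where
  toFun := f5
  map_one' := by decide
  map_mul' := by decide

lemma f5inj : Function.Injective f5hom := by decide

def S20 : Finset (Equiv.Perm (Fin 5)) :=
  Finset.image (fun p : Fin 5 × Fin 4 => c ^ p.1.val * d ^ p.2.val) Finset.univ

def S10 : Finset (Equiv.Perm (Fin 5)) := Finset.image f5 Finset.univ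

lemma S20one : (1 : Equiv.Perm (Fin 5)) ∈ S20 := by decide
lemma S20mul : ∀ a ∈ S20, ∀ b ∈ S20, a * b ∈ S20 := by decide
lemma S20inv : ∀ a ∈ S20, a⁻¹ ∈ S20 := by decide

def K20 : Subgroup (Equiv.Perm (Fin 5)) where
  carrier := ↑S20
  one_mem' := S20one
  mul_mem' := fun ha hb => S20mul _ ha _ hb
  inv_mem' := fun ha => S20inv _ ha

lemma hG20 : G₂₀ = K20 := by
  apply le_antisymm
  · rw [G₂₀, Subgroup.closure_le]
    rintro x (h | h) <;> subst h
    · exact (by decide : c ∈ S20)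
    · exact (by decide : d ∈ S20)
  · intro x hx
    have hx' : x ∈ S20 := hx
    simp only [S20, Finset.mem_image, Finset.mem_univ, true_and] at hx'
    obtain ⟨⟨i, j⟩, rfl⟩ := hx'
    have h1 : c ∈ Subgroup.closure {c, d} := Subgroup.subset_closure (Set.mem_insert _ _)
    have h2 : d ∈ Subgroup.closure {c, d} :=
      Subgroup.subset_closure (Set.mem_insert_of_mem _ rfl)
    exact mul_mem (pow_mem h1 _) (pow_mem h2 _)

lemma hclosure : Subgroup.closure {c, d ^ 2} = f5hom.range := by
  apply le_antisymm
  · rw [Subgroup.closure_le]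
    rintro x (h | h) <;> subst h
    · exact ⟨.r 1, by decide⟩
    · exact ⟨.sr 0, by decide⟩
  · rintro x ⟨y, rfl⟩
    have hc : c ∈ Subgroup.closure {c, d ^ 2} := Subgroup.subset_closure (Or.inl rfl)
    have hd : d ^ 2 ∈ Subgroup.closure {c, d ^ 2} := Subgroup.subset_closure (Or.inr rfl)
    cases y with
    | r i => exact pow_mem hc _
    | sr i => exact mul_mem hd (pow_mem hc _)

lemma hcard : Nat.card (Subgroup.closure {c, d ^ 2} : Subgroup (Equiv.Perm (Fin 5))) = 10 := by
  rw [hclosure, Nat.card_congr (MonoidHom.ofInjective f5inj).toEquiv.symm,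
    Nat.card_eq_fintype_card, DihedralGroup.card]

lemma key5 : ∀ x ∈ S20, x ^ 5 = 1 → x ≠ 1 →
    (x = c ∨ x ^ 2 = c ∨ x ^ 3 = c ∨ x ^ 4 = c) := by decide

lemma key2 : ∀ x ∈ S20, x ^ 2 = 1 → x ≠ 1 →
    (x = d ^ 2 ∨ x * c ^ 1 = d ^ 2 ∨ x * c ^ 2 = d ^ 2 ∨ x * c ^ 3 = d ^ 2 ∨ x * c ^ 4 = d ^ 2) := by
  decide

lemma keyconj : ∀ g ∈ S20, ∀ n ∈ S10, ∃ y : DihedralGroup 5, f5 y = g * n * g⁻¹ := by decide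

theorem stmt8 :
    Nat.card (Subgroup.closure {c, d ^ 2} : Subgroup (Equiv.Perm (Fin 5))) = 10 ∧
    Nonempty ((Subgroup.closure {c, d ^ 2} : Subgroup (Equiv.Perm (Fin 5))) ≃* DihedralGroup 5) ∧
    (∀ H : Subgroup (Equiv.Perm (Fin 5)), H ≤ G₂₀ → Nat.card H = 10 →
      H = Subgroup.closure {c, d ^ 2}) ∧
    ((Subgroup.closure {c, d ^ 2} : Subgroup (Equiv.Perm (Fin 5))).subgroupOf G₂₀).Normal := by
  have fact5 : Fact (Nat.Prime 5) := ⟨by norm_num⟩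
  have fact2 : Fact (Nat.Prime 2) := ⟨by norm_num⟩
  refine ⟨hcard, ⟨(MulEquiv.subgroupCongr hclosure).trans (MonoidHom.ofInjective f5inj).symm⟩,
    ?_, ?_⟩
  · intro H hle hcardH
    obtain ⟨g, hg⟩ := exists_prime_orderOf_dvd_card' (G := H) 5 (by rw [hcardH]; norm_num)
    obtain ⟨t, ht⟩ := exists_prime_orderOf_dvd_card' (G := H) 2 (by rw [hcardH]; norm_num)
    have hgG : (g : Equiv.Perm (Fin 5)) ∈ S20 := by
      have := hle g.2; rw [hG20] at this; exact this
    have htG : (t : Equiv.Perm (Fin 5)) ∈ S20 := by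
      have := hle t.2; rw [hG20] at this; exact this
    have hg5 : (g : Equiv.Perm (Fin 5)) ^ 5 = 1 := by
      have h2 := pow_orderOf_eq_one (g : Equiv.Perm (Fin 5))
      rwa [(Subgroup.orderOf_coe g).trans hg] at h2
    have hg1 : (g : Equiv.Perm (Fin 5)) ≠ 1 := by
      intro h
      have h2 : orderOf (g : Equiv.Perm (Fin 5)) = 1 := by rw [h]; exact orderOf_one
      rw [Subgroup.orderOf_coe, hg] at h2; norm_num at h2
    have ht2 : (t : Equiv.Perm (Fin 5)) ^ 2 = 1 := by
      have h2 := pow_orderOf_eq_one (t : Equiv.Perm (Fin 5))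
      rwa [(Subgroup.orderOf_coe t).trans ht] at h2
    have ht1 : (t : Equiv.Perm (Fin 5)) ≠ 1 := by
      intro h
      have h2 : orderOf (t : Equiv.Perm (Fin 5)) = 1 := by rw [h]; exact orderOf_one
      rw [Subgroup.orderOf_coe, ht] at h2; norm_num at h2
    have hcH : c ∈ H := by
      rcases key5 _ hgG hg5 hg1 with h | h | h | h
      · exact h ▸ g.2
      all_goals exact h ▸ pow_mem g.2 _
    have hdH : d ^ 2 ∈ H := by
      rcases key2 _ htG ht2 ht1 with h | h | h | h | h
      · exact h ▸ t.2
      all_goals exact h ▸ mul_mem t.2 (pow_mem hcH _)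
    symm
    apply Subgroup.eq_of_le_of_card_ge
    · rw [Subgroup.closure_le]
      rintro x (h | h) <;> subst h
      · exact hcH
      · exact hdH
    · rw [hcardH, hcard]
  · constructor
    rintro ⟨n, hnG⟩ hn ⟨g, hgG⟩
    simp only [Subgroup.mem_subgroupOf] at hn ⊢
    rw [hclosure] at hn ⊢
    have hn' : n ∈ S10 := by
      obtain ⟨y, hy⟩ := hn
      exact Finset.mem_image.mpr ⟨y, Finset.mem_univ _, hy⟩
    have hg' : g ∈ S20 := by rw [hG20] at hgG; exact hgG
    obtain ⟨y, hy⟩ := keyconj g hg' n hn'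
    exact ⟨y, hy⟩
end

section
/- For every j ∈ {0,…,4} and m ∈ {2,3}, the vector c^j • R_m lies on the quadric cone: ∑ i, (c^j • R_m) i = 0 and ∑ i, ((c^j • R_m) i)² = 0. In contrast, for every j ∈ {0,…,4}, ∑ i, ((c^j • R₁) i)² ≠ 0. (The two length-5 orbits 𝒪₂ and 𝒪₃ lie on the quadric Q ≅ ℙ¹ × ℙ¹, while the orbit 𝒪₁ does not.) -/
def IsOnQuadricCone (v : Fin 5 → ℂ) : Prop :=
  ∑ i, v i = 0 ∧ ∑ i, v i ^ 2 = 0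

theorem sum_apply_permSMul (g : Equiv.Perm (Fin 5)) (v : Fin 5 → ℂ) (f : ℂ → ℂ) :
    ∑ i, f (permSMul g v i) = ∑ i, f (v i) :=
  Equiv.sum_comp g⁻¹ (fun i => f (v i))

theorem isOnQuadricCone_permSMul_iff (g : Equiv.Perm (Fin 5)) (v : Fin 5 → ℂ) :
    IsOnQuadricCone (permSMul g v) ↔ IsOnQuadricCone v := by
  rw [IsOnQuadricCone, IsOnQuadricCone, sum_apply_permSMul g v (fun x => x),
    sum_apply_permSMul g v (· ^ 2)]

theorem isOnQuadricCone_R₂ : IsOnQuadricCone R₂ := by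
  constructor <;> simp [R₂, Fin.sum_univ_five, Complex.I_sq]

theorem isOnQuadricCone_R₃ : IsOnQuadricCone R₃ := by
  constructor <;> simp [R₃, Fin.sum_univ_five, Complex.I_sq]

theorem sum_sq_R₁ : ∑ i, R₁ i ^ 2 = 4 := by
  simp [R₁, Fin.sum_univ_five]
  norm_num

theorem stmt10 :
    (∀ j : Fin 5, ∀ Rm ∈ ({R₂, R₃} : Set (Fin 5 → ℂ)),
      (∑ i, permSMul (c ^ (j : ℕ)) Rm i) = 0 ∧
      (∑ i, (permSMul (c ^ (j : ℕ)) Rm i) ^ 2) = 0) ∧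
    (∀ j : Fin 5, (∑ i, (permSMul (c ^ (j : ℕ)) R₁ i) ^ 2) ≠ 0) := by
  refine ⟨fun j Rm hRm => (isOnQuadricCone_permSMul_iff _ Rm).2 ?_, fun j => ?_⟩
  · rcases hRm with rfl | rfl
    exacts [isOnQuadricCone_R₂, isOnQuadricCone_R₃]
  · rw [sum_apply_permSMul _ R₁ (· ^ 2), sum_sq_R₁]
    norm_num
end

section
/- For each m ∈ {2,3}, the five points c^j • R_m (j = 0,…,4) of the quadric Q are in general position, namely: (a) any four of the five vectors c⁰ • R_m, …, c⁴ • R_m are linearly independent over ℂ (no four of the five points lie on a plane in ℙ³ = {∑ x_i = 0}); and (b) for j ≠ j', the ℂ-span of c^j • R_m and c^{j'} • R_m is not contained in the quadric cone {v : ∑ i, (v i)² = 0} (no two of the five points lie on a line contained in Q). -/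
open scoped translate

lemma c_pow_val_inv_apply (j i : Fin 5) : (c ^ (j : ℕ))⁻¹ i = i - j := by
  revert j i
  decide

lemma permSMul_c_pow_val (j : Fin 5) (v : Fin 5 → ℂ) : permSMul (c ^ (j : ℕ)) v = τ j v := by
  ext i
  simp [permSMul, c_pow_val_inv_apply]

section Translates

variable {K G ι : Type*} [AddCommGroup G]

lemma LinearIndependent.translate_add_left [CommRing K] {f : G → K} {e : ι → G}
    (h : LinearIndependent K fun k => τ (e k) f) (a : G) :
    LinearIndependent K fun k => τ (a + e k) f := by
  have hinj := LinearMap.funLeft_injective_of_surjective K K _ (Equiv.subRight a).surjective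
  simp_rw [translate_add]
  exact h.map' _ (LinearMap.ker_eq_bot.2 hinj)

lemma linearIndependent_translate_of_det_ne_zero [CommRing K] [IsDomain K] [Fintype ι]
    [DecidableEq ι] (f : G → K) (e : ι → G)
    (hdet : (Matrix.of fun k i => f (e i - e k)).det ≠ 0) :
    LinearIndependent K fun k => τ (e k) f :=
  (Matrix.linearIndependent_rows_of_det_ne_zero hdet).of_comp (LinearMap.funLeft K K e)

lemma sum_translate_mul_translate [Fintype G] [CommSemiring K] (f : G → K) (j k : G) :
    ∑ x, τ j f x * τ k f x = ∑ x, f x * f (x - (k - j)) := by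
  rw [← sum_translate j (fun x => f x * f (x - (k - j)))]
  simp only [translate_apply, sub_sub, add_sub_cancel]

lemma sum_mul_eq_zero_of_span_pair_subset [Field K] [NeZero (2 : K)] [Fintype ι] {u v : ι → K}
    (h : (Submodule.span K {u, v} : Set (ι → K)) ⊆ {w | ∑ i, w i ^ 2 = 0}) :
    ∑ i, u i * v i = 0 := by
  have hu : ∑ i, u i ^ 2 = 0 := h (Submodule.subset_span (by simp))
  have hv : ∑ i, v i ^ 2 = 0 := h (Submodule.subset_span (by simp))
  have huv : ∑ i, (u + v) i ^ 2 = 0 :=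
    h (Submodule.add_mem _ (Submodule.subset_span (by simp)) (Submodule.subset_span (by simp)))
  have polarization : ∑ i, (u + v) i ^ 2 = ∑ i, u i ^ 2 + ∑ i, v i ^ 2 + 2 * ∑ i, u i * v i := by
    simp only [Pi.add_apply, add_sq, Finset.sum_add_distrib, Finset.mul_sum]
    ring_nf
  rw [huv, hu, hv, zero_add, zero_add, eq_comm, mul_eq_zero] at polarization
  exact polarization.resolve_left two_ne_zero

lemma not_span_translate_pair_subset [Field K] [NeZero (2 : K)] [Fintype G] (f : G → K)
    (hf : ∀ d ≠ 0, ∑ x, f x * f (x - d) ≠ 0) {j k : G} (hjk : j ≠ k) :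
    ¬ (Submodule.span K {τ j f, τ k f} : Set (G → K)) ⊆ {w | ∑ x, w x ^ 2 = 0} := fun h =>
  hf (k - j) (sub_ne_zero.2 hjk.symm) <| by
    rw [← sum_translate_mul_translate]
    exact sum_mul_eq_zero_of_span_pair_subset h

end Translates

lemma Fin.exists_eq_image_add_castSucc_of_card_eq_four (s : Finset (Fin 5)) (hs : s.card = 4) :
    ∃ a : Fin 5, s = Finset.univ.image fun k : Fin 4 => a + k.castSucc := by
  revert s
  decide

lemma linearIndepOn_translate_of_card_eq_four {K : Type*} [CommRing K] {f : Fin 5 → K}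
    (h : LinearIndependent K fun k : Fin 4 => τ k.castSucc f) (s : Finset (Fin 5))
    (hs : s.card = 4) : LinearIndepOn K (τ · f) (s : Set (Fin 5)) := by
  obtain ⟨a, rfl⟩ := Fin.exists_eq_image_add_castSucc_of_card_eq_four s hs
  rw [Finset.coe_image, Finset.coe_univ]
  exact LinearIndepOn.image_of_comp _ _ ((h.translate_add_left a).linearIndepOn_univ)

lemma linearIndependent_translate_castSucc_R₂ :
    LinearIndependent ℂ fun k : Fin 4 => τ k.castSucc R₂ := by
  refine linearIndependent_translate_of_det_ne_zero _ _ ?_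
  simp [Matrix.det_succ_row_zero, Fin.sum_univ_succ, Fin.succAbove, R₂]
  norm_num [Complex.ext_iff]

lemma linearIndependent_translate_castSucc_R₃ :
    LinearIndependent ℂ fun k : Fin 4 => τ k.castSucc R₃ := by
  refine linearIndependent_translate_of_det_ne_zero _ _ ?_
  simp [Matrix.det_succ_row_zero, Fin.sum_univ_succ, Fin.succAbove, R₃]
  norm_num [Complex.ext_iff]

lemma sum_mul_sub_R₂_ne_zero : ∀ d ≠ 0, ∑ x, R₂ x * R₂ (x - d) ≠ 0 := by
  intro d hd
  fin_cases d
  · exact absurd rfl hd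
  all_goals simp [Fin.sum_univ_five, R₂, Complex.ext_iff]

lemma sum_mul_sub_R₃_ne_zero : ∀ d ≠ 0, ∑ x, R₃ x * R₃ (x - d) ≠ 0 := by
  intro d hd
  fin_cases d
  · exact absurd rfl hd
  all_goals simp [Fin.sum_univ_five, R₃, Complex.ext_iff]

theorem stmt11 :
    ∀ Rm ∈ ({R₂, R₃} : Set (Fin 5 → ℂ)),
      (∀ s : Finset (Fin 5), s.card = 4 →
        LinearIndependent ℂ (fun j : s => permSMul (c ^ ((j : Fin 5) : ℕ)) Rm)) ∧
      (∀ j j' : Fin 5, j ≠ j' →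
        ¬ ((Submodule.span ℂ
              {permSMul (c ^ (j : ℕ)) Rm, permSMul (c ^ (j' : ℕ)) Rm} : Set (Fin 5 → ℂ)) ⊆
            {v : Fin 5 → ℂ | (∑ i, (v i) ^ 2) = 0})) := by
  intro Rm hRm
  obtain ⟨hindep, hautocorr⟩ : (LinearIndependent ℂ fun k : Fin 4 => τ k.castSucc Rm) ∧
      ∀ d ≠ 0, ∑ x, Rm x * Rm (x - d) ≠ 0 := by
    rcases hRm with rfl | rfl
    exacts [⟨linearIndependent_translate_castSucc_R₂, sum_mul_sub_R₂_ne_zero⟩,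
      ⟨linearIndependent_translate_castSucc_R₃, sum_mul_sub_R₃_ne_zero⟩]
  simp only [permSMul_c_pow_val]
  exact ⟨linearIndepOn_translate_of_card_eq_four hindep,
    fun j j' hjj' => not_span_translate_pair_subset Rm hautocorr hjj'⟩
end

section
/- In PGL(2,ℂ) = Matrix.ProjectiveGeneralLinearGroup (Fin 2) ℂ, let r, s, t be the images of the invertible matrices !![ζ, 0; 0, 1], !![0, 1; 1, 0], !![−1, 0; 0, 1] respectively, where ζ ∈ ℂ is a primitive 5th root of unity. Then the subgroup generated by r and s has order 10 (it is a dihedral group D₁₀ acting on ℙ¹), the subgroup generated by r, s, t has order 20 (a dihedral group D₂₀), and the normalizer in PGL(2,ℂ) of Subgroup.closure {r, s} is exactly Subgroup.closure {r, s, t}. -/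
/-- The projective general linear group `PGL(n, R)`, i.e. `GL(n, R)` modulo its center. -/
abbrev ProjectiveGeneralLinearGroup (n : Type*) [DecidableEq n] [Fintype n]
    (K : Type*) [CommRing K] : Type _ :=
  GL n K ⧸ Subgroup.center (GL n K)

/-!
`r` and `t` are images of diagonal matrices and `s` swaps the coordinates, so everything happens
inside the group generated by `s` and the image `A = {[diag(a, 1)]}` of the diagonal torus, which
`s` inverts by conjugation. Hence `r, s` and `tr = [diag(-ζ, 1)], s` satisfy the dihedral relations
of orders 5 and 10, and since `s ∉ A` the induced maps from the dihedral groups are injective.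

If `g` normalizes `H = ⟨r, s⟩`, then `g r g⁻¹ ∈ H` is not an involution, hence a rotation, so a
lift of `g` carries the eigenlines of `diag(ζ, 1)` to coordinate lines: `g` or `g s` lies in `A`.
For `g = [diag(μ, 1)]` the reflection `g s g⁻¹ = s [diag(μ⁻², 1)]` lies in `H` only if
`μ⁻² ∈ ⟨ζ⟩`, so `μ¹⁰ = 1` and `μ = ±ζᵏ`, i.e. `g ∈ ⟨r, s, t⟩`.
-/

section Group

variable {G : Type*} [Group G]

lemma mul_mul_inv_eq_mul_inv_sq {ρ σ : G} (hσ : σ ^ 2 = 1) (h : σ * ρ * σ = ρ⁻¹) :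
    ρ * σ * ρ⁻¹ = σ * ρ⁻¹ ^ 2 := by
  calc ρ * σ * ρ⁻¹ = σ ^ 2 * ρ * σ * ρ⁻¹ := by rw [hσ, one_mul]
    _ = σ * ρ⁻¹ ^ 2 := by rw [sq, sq, ← h]; group

lemma Subgroup.mem_normalizer_closure_of_forall_commute {s : Set G} {g : G}
    (h : ∀ x ∈ s, Commute g x) : g ∈ normalizer (closure s) := by
  rw [mem_normalizer_iff_map_conj_eq, MonoidHom.map_closure]
  congr 1
  exact (Set.image_congr fun x hx ↦ (h x hx).mul_inv_cancel).trans (Set.image_id s)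

structure IsDihedralPair (n : ℕ) (ρ σ : G) : Prop where
  pow_eq_one : ρ ^ n = 1
  sq_eq_one : σ ^ 2 = 1
  mul_mul_eq_inv : σ * ρ * σ = ρ⁻¹

namespace IsDihedralPair

variable {n : ℕ} {ρ σ : G}

lemma commute_of_two (h : IsDihedralPair 2 ρ σ) : Commute ρ σ := by
  have hρ : ρ⁻¹ = ρ := inv_eq_of_mul_eq_one_right (by rw [← sq, h.pow_eq_one])
  calc ρ * σ = σ * ρ * σ * σ := by rw [h.mul_mul_eq_inv, hρ]
    _ = σ * ρ := by rw [mul_assoc, ← sq, h.sq_eq_one, mul_one]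

variable (h : IsDihedralPair n ρ σ)
include h

lemma inv_eq : σ⁻¹ = σ := inv_eq_of_mul_eq_one_right (by rw [← sq, h.sq_eq_one])

lemma mul_pow_mul_eq_inv (k : ℕ) : σ * ρ ^ k * σ = (ρ ^ k)⁻¹ := by
  have h' := conj_pow (a := σ) (b := ρ) (i := k)
  rwa [h.inv_eq, h.mul_mul_eq_inv, inv_pow, eq_comm] at h'

variable [NeZero n]

lemma pow_val_add (i j : ZMod n) : ρ ^ (i + j).val = ρ ^ i.val * ρ ^ j.val := by
  rw [ZMod.val_add, ← pow_eq_pow_mod _ h.pow_eq_one, pow_add]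

lemma pow_val_sub (i j : ZMod n) : ρ ^ (j - i).val = (ρ ^ i.val)⁻¹ * ρ ^ j.val := by
  rw [eq_inv_mul_iff_mul_eq, ← h.pow_val_add, add_sub_cancel]

def lift : DihedralGroup n →* G where
  toFun
    | .r i => ρ ^ i.val
    | .sr i => σ * ρ ^ i.val
  map_one' := show ρ ^ (0 : ZMod n).val = 1 by simp
  map_mul' := by
    rintro (i | i) (j | j)
    · exact h.pow_val_add i j
    · show σ * ρ ^ (j - i).val = ρ ^ i.val * (σ * ρ ^ j.val)
      rw [h.pow_val_sub, ← h.mul_pow_mul_eq_inv]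
      simp only [← mul_assoc, ← sq, h.sq_eq_one, one_mul]
    · show σ * ρ ^ (i + j).val = σ * ρ ^ i.val * ρ ^ j.val
      rw [h.pow_val_add, mul_assoc]
    · show ρ ^ (j - i).val = σ * ρ ^ i.val * (σ * ρ ^ j.val)
      rw [h.pow_val_sub, ← h.mul_pow_mul_eq_inv, mul_assoc]

@[simp] lemma lift_r (i : ZMod n) : h.lift (.r i) = ρ ^ i.val := rfl

@[simp] lemma lift_sr (i : ZMod n) : h.lift (.sr i) = σ * ρ ^ i.val := rfl

lemma range_lift : h.lift.range = Subgroup.closure {ρ, σ} := by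
  have hρ : ρ ∈ Subgroup.closure {ρ, σ} := Subgroup.subset_closure (by simp)
  have hσ : σ ∈ Subgroup.closure {ρ, σ} := Subgroup.subset_closure (by simp)
  apply le_antisymm
  · rintro _ ⟨i | i, rfl⟩
    · exact pow_mem hρ _
    · exact mul_mem hσ (pow_mem hρ _)
  · rw [Subgroup.closure_le]
    rintro x (rfl | rfl)
    · refine ⟨.r 1, ?_⟩
      rw [lift_r, ZMod.val_one_eq_one_mod, ← pow_eq_pow_mod _ h.pow_eq_one, pow_one]
    · exact ⟨.sr 0, by simp⟩

lemma mem_zpowers_or_of_mem_closure {x : G} (hx : x ∈ Subgroup.closure {ρ, σ}) :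
    x ∈ Subgroup.zpowers ρ ∨ σ * x ∈ Subgroup.zpowers ρ ∧ x ^ 2 = 1 := by
  rw [← h.range_lift] at hx
  obtain ⟨i | i, rfl⟩ := hx
  · exact .inl (pow_mem (Subgroup.mem_zpowers ρ) _)
  · refine .inr ⟨?_, ?_⟩
    · rw [lift_sr, ← mul_assoc, ← sq, h.sq_eq_one, one_mul]
      exact pow_mem (Subgroup.mem_zpowers ρ) _
    · rw [← map_pow, sq, DihedralGroup.sr_mul_self, map_one]

lemma lift_injective (hρ : orderOf ρ = n) (hσ : σ ∉ Subgroup.zpowers ρ) :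
    Function.Injective h.lift := by
  rw [injective_iff_map_eq_one]
  rintro (i | i) hi
  · rw [lift_r, ← orderOf_dvd_iff_pow_eq_one, hρ] at hi
    rw [DihedralGroup.one_def, ← ZMod.natCast_zmod_val i, (ZMod.natCast_eq_zero_iff _ _).2 hi]
  · rw [lift_sr] at hi
    exact absurd (eq_inv_of_mul_eq_one_left hi ▸ inv_mem (pow_mem (Subgroup.mem_zpowers ρ) _)) hσ

noncomputable def closureEquiv (hρ : orderOf ρ = n) (hσ : σ ∉ Subgroup.zpowers ρ) :
    Subgroup.closure {ρ, σ} ≃* DihedralGroup n :=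
  (MulEquiv.subgroupCongr h.range_lift.symm).trans
    (MonoidHom.ofInjective (h.lift_injective hρ hσ)).symm

lemma card_closure (hρ : orderOf ρ = n) (hσ : σ ∉ Subgroup.zpowers ρ) :
    Nat.card (Subgroup.closure {ρ, σ}) = 2 * n := by
  rw [Nat.card_congr (h.closureEquiv hρ hσ).toEquiv, DihedralGroup.nat_card]

end IsDihedralPair

end Group

namespace Units

variable {K : Type*} [Field K]

lemma mem_zpowers_or_neg_mem_zpowers {z μ : Kˣ} (hz : Odd (orderOf z))
    (hμ : μ ^ (2 * orderOf z) = 1) : μ ∈ Subgroup.zpowers z ∨ -μ ∈ Subgroup.zpowers z := by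
  have : NeZero (orderOf z) := ⟨hz.pos.ne'⟩
  have hroots : ∀ ν : Kˣ, ν ^ orderOf z = 1 → ν ∈ Subgroup.zpowers z := fun ν hν ↦ by
    rw [(IsPrimitiveRoot.orderOf z).zpowers_eq]
    exact (mem_rootsOfUnity _ _).2 hν
  have hsq : ((μ ^ orderOf z : Kˣ) : K) ^ 2 = 1 := by
    rw [← val_pow_eq_pow_val, ← pow_mul, mul_comm, hμ, val_one]
  rcases sq_eq_one_iff.1 hsq with h | h
  · exact .inl (hroots μ (Units.ext h))
  · refine .inr (hroots (-μ) ?_)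
    rw [hz.neg_pow, show μ ^ orderOf z = -1 from Units.ext (by simpa using h), neg_neg]

lemma orderOf_neg (hK : ringChar K ≠ 2) {z : Kˣ} (hz : Odd (orderOf z)) :
    orderOf (-z) = 2 * orderOf z := by
  have h2 : orderOf (-1 : Kˣ) = 2 := by
    rw [← orderOf_units, Units.val_neg, val_one, orderOf_neg_one, if_neg hK]
  rw [← neg_one_mul, (Commute.all _ _).orderOf_mul_eq_mul_orderOf_of_coprime
    (by rwa [h2, Nat.coprime_two_left]), h2]

end Units

open Matrix

lemma Matrix.fin_two_diag_or_antidiag_of_mul_diag_eq {K : Type*} [Field K] {p q u v a b c : K}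
    (hdet : p * v - q * u ≠ 0) (ha : a ≠ 1)
    (h : !![p, q; u, v] * !![a, 0; 0, 1] = c • (!![b, 0; 0, 1] * !![p, q; u, v])) :
    (q = 0 ∧ u = 0) ∨ (p = 0 ∧ v = 0) := by
  simp only [mul_fin_two, smul_of, EmbeddingLike.apply_eq_iff_eq, vecCons_inj, smul_cons,
    smul_eq_mul, smul_empty, and_true] at h
  obtain ⟨⟨h00, h01⟩, h10, h11⟩ := h
  have hqp : q = 0 ∨ p = 0 := by
    by_contra! ⟨hq, hp⟩
    have hcb : c * b = 1 := mul_right_cancel₀ hq (by linear_combination -h01)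
    exact ha (mul_left_cancel₀ hp (by linear_combination h00 + p * hcb))
  have huv : u = 0 ∨ v = 0 := by
    by_contra! ⟨hu, hv⟩
    have hc : c = 1 := mul_right_cancel₀ hv (by linear_combination -h11)
    exact ha (mul_left_cancel₀ hu (by linear_combination h10 + u * hc))
  rcases hqp with rfl | rfl <;> rcases huv with rfl | rfl
  · exact .inl ⟨rfl, rfl⟩
  · exact (hdet (by ring)).elim
  · exact (hdet (by ring)).elim
  · exact .inr ⟨rfl, rfl⟩

local notation "PGL₂" => ProjectiveGeneralLinearGroup (Fin 2)

namespace ProjectiveGeneralLinearGroup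

lemma mk_eq_mk_iff {n R : Type*} [Fintype n] [DecidableEq n] [CommRing R] {A B : GL n R} :
    (A : ProjectiveGeneralLinearGroup n R) = B ↔
      ∃ c : Rˣ, (B : Matrix n n R) = (c : R) • (A : Matrix n n R) := by
  refine (ProjGenLinGroup.mk_eq_mk_iff (g₁ := A) (g₂ := B)).trans ?_
  simp [Units.ext_iff, eq_comm, ← smul_eq_mul_diagonal]

variable {K : Type*} [Field K]

def diagGL : Kˣ →* GL (Fin 2) K :=
  Units.map ((diagonalRingHom (Fin 2) K : (Fin 2 → K) →* Matrix (Fin 2) (Fin 2) K).comp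
    (MonoidHom.mulSingle (fun _ : Fin 2 ↦ K) 0))

@[simp] lemma val_diagGL (a : Kˣ) :
    (diagGL a : Matrix (Fin 2) (Fin 2) K) = !![(a : K), 0; 0, 1] := by
  ext i j
  fin_cases i <;> fin_cases j <;> simp [diagGL]

def diagPGL : Kˣ →* PGL₂ K := (QuotientGroup.mk' _).comp diagGL

lemma diagPGL_apply (a : Kˣ) : diagPGL a = (diagGL a : PGL₂ K) := rfl

lemma diagPGL_injective : Function.Injective (diagPGL : Kˣ →* PGL₂ K) := by
  rw [injective_iff_map_eq_one]
  intro a ha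
  obtain ⟨c, hc⟩ := mk_eq_mk_iff.1 ((diagPGL_apply a).symm.trans ha).symm
  simp only [val_diagGL, Units.val_one, one_fin_two, smul_of, smul_cons, smul_eq_mul, mul_one,
    mul_zero, smul_empty, EmbeddingLike.apply_eq_iff_eq, vecCons_inj, and_true, true_and] at hc
  exact Units.ext (hc.1.trans hc.2.symm)

lemma zpowers_diagPGL_le_range (z : Kˣ) : Subgroup.zpowers (diagPGL z) ≤ (diagPGL (K := K)).range :=
  Subgroup.zpowers_le.2 ⟨z, rfl⟩

lemma mk_mem_range_diagPGL {M : GL (Fin 2) K} {p v : K}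
    (hM : (M : Matrix (Fin 2) (Fin 2) K) = !![p, 0; 0, v]) :
    (M : PGL₂ K) ∈ (diagPGL (K := K)).range := by
  have hdet := GeneralLinearGroup.det_ne_zero M
  rw [hM, det_fin_two_of, mul_zero, sub_zero] at hdet
  have hp := left_ne_zero_of_mul hdet
  have hv := right_ne_zero_of_mul hdet
  refine ⟨Units.mk0 (p / v) (div_ne_zero hp hv), mk_eq_mk_iff.2 ⟨Units.mk0 v hv, ?_⟩⟩
  rw [hM, val_diagGL]
  simp [mul_div_cancel₀ p hv]

lemma closure_diagPGL_neg_one_eq {z : Kˣ} (hz : Odd (orderOf z)) (x : PGL₂ K) :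
    Subgroup.closure {diagPGL z, x, diagPGL (-1)} = Subgroup.closure {diagPGL (-z), x} := by
  have hz1 : (-z) ^ orderOf z = -1 := by rw [hz.neg_pow, pow_orderOf_eq_one]
  apply le_antisymm <;> rw [Subgroup.closure_le]
  · rintro _ (rfl | rfl | rfl)
    · rw [show diagPGL z = diagPGL (-z) ^ (orderOf z + 1) by
        rw [← map_pow, pow_succ, hz1, neg_one_mul, neg_neg]]
      exact pow_mem (Subgroup.subset_closure (by simp)) _
    · exact Subgroup.subset_closure (by simp)
    · rw [← hz1, map_pow]
      exact pow_mem (Subgroup.subset_closure (by simp)) _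
  · rintro _ (rfl | rfl)
    · rw [← neg_one_mul z, map_mul]
      exact mul_mem (Subgroup.subset_closure (by simp)) (Subgroup.subset_closure (by simp))
    · exact Subgroup.subset_closure (by simp)

section Swap

variable {S : GL (Fin 2) K} (hS : (S : Matrix (Fin 2) (Fin 2) K) = !![0, 1; 1, 0])
include hS

lemma mk_sq_eq_one : (S : PGL₂ K) ^ 2 = 1 := by
  have : S ^ 2 = 1 := Units.ext (by simp [sq, hS, one_fin_two])
  rw [← QuotientGroup.mk_pow, this, QuotientGroup.mk_one]

lemma mk_mul_diagPGL_mul_mk (a : Kˣ) : (S : PGL₂ K) * diagPGL a * S = (diagPGL a)⁻¹ := by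
  rw [← map_inv, diagPGL_apply, diagPGL_apply, ← QuotientGroup.mk_mul, ← QuotientGroup.mk_mul,
    mk_eq_mk_iff]
  refine ⟨a⁻¹, ?_⟩
  rw [val_diagGL, Units.val_mul, Units.val_mul, hS, val_diagGL]
  simp

lemma mk_notMem_range_diagPGL : (S : PGL₂ K) ∉ (diagPGL (K := K)).range := by
  rintro ⟨a, ha⟩
  obtain ⟨c, hc⟩ := mk_eq_mk_iff.1 ha
  simp [hS] at hc

lemma mk_notMem_zpowers_diagPGL (z : Kˣ) : (S : PGL₂ K) ∉ Subgroup.zpowers (diagPGL z) :=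
  fun h ↦ mk_notMem_range_diagPGL hS (zpowers_diagPGL_le_range z h)

lemma isDihedralPair_diagPGL {n : ℕ} {z : Kˣ} (hz : z ^ n = 1) :
    IsDihedralPair n (diagPGL z) (S : PGL₂ K) :=
  ⟨by rw [← map_pow, hz, map_one], mk_sq_eq_one hS, mk_mul_diagPGL_mul_mk hS z⟩

lemma mem_range_or_mul_mem_range_of_conj_mem_range {a : Kˣ} (ha : a ≠ 1) {g : PGL₂ K}
    (hg : g * diagPGL a * g⁻¹ ∈ (diagPGL (K := K)).range) :
    g ∈ (diagPGL (K := K)).range ∨ g * S ∈ (diagPGL (K := K)).range := by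
  obtain ⟨M, rfl⟩ := QuotientGroup.mk_surjective g
  obtain ⟨b, hb⟩ := hg
  rw [eq_mul_inv_iff_mul_eq, diagPGL_apply, diagPGL_apply, ← QuotientGroup.mk_mul,
    ← QuotientGroup.mk_mul] at hb
  obtain ⟨c, hc⟩ := mk_eq_mk_iff.1 hb
  obtain ⟨p, q, u, v, hM⟩ : ∃ p q u v, (M : Matrix (Fin 2) (Fin 2) K) = !![p, q; u, v] :=
    ⟨_, _, _, _, eta_fin_two _⟩
  have hdet := GeneralLinearGroup.det_ne_zero M
  rw [hM, det_fin_two_of] at hdet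
  rw [Units.val_mul, Units.val_mul, hM, val_diagGL, val_diagGL] at hc
  rcases fin_two_diag_or_antidiag_of_mul_diag_eq hdet (Units.val_eq_one.not.2 ha) hc with
    ⟨rfl, rfl⟩ | ⟨rfl, rfl⟩
  · exact .inl (mk_mem_range_diagPGL hM)
  · rw [← QuotientGroup.mk_mul]
    exact .inr (mk_mem_range_diagPGL (p := q) (v := u) (by simp [hM, hS]))

lemma closure_le_normalizer_closure (z : Kˣ) :
    Subgroup.closure {diagPGL z, (S : PGL₂ K), diagPGL (-1)} ≤
      Subgroup.normalizer (Subgroup.closure {diagPGL z, (S : PGL₂ K)}) := by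
  rw [Subgroup.closure_le]
  rintro x (rfl | rfl | rfl)
  · exact Subgroup.le_normalizer (Subgroup.subset_closure (by simp))
  · exact Subgroup.le_normalizer (Subgroup.subset_closure (by simp))
  · refine Subgroup.mem_normalizer_closure_of_forall_commute ?_
    rintro x (rfl | rfl)
    · exact (Commute.all _ _).map diagPGL
    · exact (isDihedralPair_diagPGL hS (neg_one_sq (R := Kˣ))).commute_of_two

lemma diagPGL_mem_closure_of_mem_normalizer {z μ : Kˣ} (hz : Odd (orderOf z))
    (hμ : diagPGL μ ∈ Subgroup.normalizer (Subgroup.closure {diagPGL z, (S : PGL₂ K)})) :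
    diagPGL μ ∈ Subgroup.closure {diagPGL z, (S : PGL₂ K), diagPGL (-1)} := by
  have : NeZero (orderOf z) := ⟨hz.pos.ne'⟩
  have hzpow : ∀ ν ∈ Subgroup.zpowers z,
      diagPGL ν ∈ Subgroup.closure {diagPGL z, (S : PGL₂ K), diagPGL (-1)} := fun ν hν ↦
    Subgroup.zpowers_le.2 (Subgroup.subset_closure (by simp))
      (MonoidHom.map_zpowers diagPGL z ▸ Subgroup.mem_map_of_mem _ hν)
  have hmem : (S : PGL₂ K) * diagPGL (μ⁻¹ ^ 2) ∈ Subgroup.closure {diagPGL z, (S : PGL₂ K)} := by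
    rw [map_pow, map_inv,
      ← mul_mul_inv_eq_mul_inv_sq (mk_sq_eq_one hS) (mk_mul_diagPGL_mul_mk hS μ)]
    exact (Subgroup.mem_normalizer_iff.1 hμ S).1 (Subgroup.subset_closure (by simp))
  rcases (isDihedralPair_diagPGL hS (pow_orderOf_eq_one z)).mem_zpowers_or_of_mem_closure hmem
    with h | ⟨h, -⟩
  · have hS' := mul_mem (zpowers_diagPGL_le_range z h) (MonoidHom.mem_range.2 ⟨(μ⁻¹ ^ 2)⁻¹, rfl⟩)
    rw [map_inv, mul_inv_cancel_right] at hS'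
    exact absurd hS' (mk_notMem_range_diagPGL hS)
  · rw [← mul_assoc, ← sq, mk_sq_eq_one hS, one_mul, ← MonoidHom.map_zpowers,
      Subgroup.mem_map_iff_mem diagPGL_injective] at h
    have hμ2 : μ ^ (2 * orderOf z) = 1 := by
      rw [← inv_eq_one, ← inv_pow, pow_mul]
      exact orderOf_dvd_iff_pow_eq_one.1 (orderOf_dvd_of_mem_zpowers h)
    rcases Units.mem_zpowers_or_neg_mem_zpowers hz hμ2 with h | h
    · exact hzpow μ h
    · rw [← neg_neg μ, ← neg_one_mul (-μ), map_mul]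
      exact mul_mem (Subgroup.subset_closure (by simp)) (hzpow _ h)

lemma normalizer_closure_eq {z : Kˣ} (hz : Odd (orderOf z)) (hz1 : z ≠ 1) :
    Subgroup.normalizer (Subgroup.closure {diagPGL z, (S : PGL₂ K)}) =
      Subgroup.closure {diagPGL z, (S : PGL₂ K), diagPGL (-1)} := by
  refine le_antisymm (fun g hg ↦ ?_) (closure_le_normalizer_closure hS z)
  have : NeZero (orderOf z) := ⟨hz.pos.ne'⟩
  have hconj : g * diagPGL z * g⁻¹ ∈ Subgroup.zpowers (diagPGL z) := by
    refine ((isDihedralPair_diagPGL hS (pow_orderOf_eq_one z)).mem_zpowers_or_of_mem_closure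
      ((Subgroup.mem_normalizer_iff.1 hg _).1 (Subgroup.subset_closure (by simp)))).resolve_right ?_
    rintro ⟨-, hsq⟩
    rw [conj_pow, conj_eq_one_iff, ← map_pow, map_eq_one_iff _ diagPGL_injective] at hsq
    exact hz1 (orderOf_eq_one_iff.1
      (hz.coprime_two_right.eq_one_of_dvd (orderOf_dvd_of_pow_eq_one hsq)))
  have hS_mem : (S : PGL₂ K) ∈ Subgroup.closure {diagPGL z, (S : PGL₂ K)} :=
    Subgroup.subset_closure (by simp)
  rcases mem_range_or_mul_mem_range_of_conj_mem_range hS hz1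
      (zpowers_diagPGL_le_range z hconj) with ⟨μ, rfl⟩ | ⟨μ, hμ⟩
  · exact diagPGL_mem_closure_of_mem_normalizer hS hz hg
  · have hgS := diagPGL_mem_closure_of_mem_normalizer hS hz
      (hμ ▸ mul_mem hg (Subgroup.le_normalizer hS_mem))
    rw [hμ] at hgS
    simpa [mul_assoc, ← sq, mk_sq_eq_one hS] using
      mul_mem hgS (Subgroup.subset_closure (by simp) :
        (S : PGL₂ K) ∈ Subgroup.closure {diagPGL z, (S : PGL₂ K), diagPGL (-1)})

end Swap

end ProjectiveGeneralLinearGroup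

theorem stmt15 (ζ : ℂ) (hζ : IsPrimitiveRoot ζ 5)
    (R S T : GL (Fin 2) ℂ)
    (hR : (R : Matrix (Fin 2) (Fin 2) ℂ) = !![ζ, 0; 0, 1])
    (hS : (S : Matrix (Fin 2) (Fin 2) ℂ) = !![0, 1; 1, 0])
    (hT : (T : Matrix (Fin 2) (Fin 2) ℂ) = !![-1, 0; 0, 1])
    (r s t : ProjectiveGeneralLinearGroup (Fin 2) ℂ)
    (hr : r = QuotientGroup.mk R) (hs : s = QuotientGroup.mk S)
    (ht : t = QuotientGroup.mk T) :
    Nat.card (Subgroup.closure {r, s} : Subgroup (ProjectiveGeneralLinearGroup (Fin 2) ℂ)) = 10 ∧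
    Nonempty ((Subgroup.closure {r, s} : Subgroup (ProjectiveGeneralLinearGroup (Fin 2) ℂ)) ≃*
      DihedralGroup 5) ∧
    Nat.card
      (Subgroup.closure {r, s, t} : Subgroup (ProjectiveGeneralLinearGroup (Fin 2) ℂ)) = 20 ∧
    Nonempty ((Subgroup.closure {r, s, t} : Subgroup (ProjectiveGeneralLinearGroup (Fin 2) ℂ)) ≃*
      DihedralGroup 10) ∧
    Subgroup.normalizer (Subgroup.closure {r, s}) = Subgroup.closure {r, s, t} := by
  open ProjectiveGeneralLinearGroup in
  obtain ⟨z, rfl⟩ : ∃ z : ℂˣ, (z : ℂ) = ζ := ⟨(hζ.isUnit (by norm_num)).unit, rfl⟩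
  have hz : orderOf z = 5 := by rw [← orderOf_units, ← hζ.eq_orderOf]
  have hz_odd : Odd (orderOf z) := by rw [hz]; decide
  have hz1 : z ≠ 1 := by rintro rfl; simp at hz
  have hnz : orderOf (-z) = 10 := by
    rw [Units.orderOf_neg (by rw [ringChar.eq ℂ 0]; norm_num) hz_odd, hz]
  have hr5 : orderOf (diagPGL z) = 5 := by rw [orderOf_injective _ diagPGL_injective, hz]
  have hr10 : orderOf (diagPGL (-z)) = 10 := by rw [orderOf_injective _ diagPGL_injective, hnz]
  have hH := isDihedralPair_diagPGL hS (hz ▸ pow_orderOf_eq_one z)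
  have hK := isDihedralPair_diagPGL hS (hnz ▸ pow_orderOf_eq_one (-z))
  obtain rfl : r = diagPGL z := by
    rw [hr, diagPGL_apply, show R = diagGL z from Units.ext (by simp [hR])]
  obtain rfl : t = diagPGL (-1) := by
    rw [ht, diagPGL_apply, show T = diagGL (-1) from Units.ext (by simp [hT])]
  subst hs
  have hrst := closure_diagPGL_neg_one_eq hz_odd (S : PGL₂ ℂ)
  refine ⟨hH.card_closure hr5 (mk_notMem_zpowers_diagPGL hS z),
    ⟨hH.closureEquiv hr5 (mk_notMem_zpowers_diagPGL hS z)⟩, ?_, ?_,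
    normalizer_closure_eq hS hz_odd hz1⟩
  · rw [hrst]
    exact hK.card_closure hr10 (mk_notMem_zpowers_diagPGL hS (-z))
  · rw [hrst]
    exact ⟨hK.closureEquiv hr10 (mk_notMem_zpowers_diagPGL hS (-z))⟩
end
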